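/- Let X be an initial space such that for every f ∈ X and 0 ≤ r < 1 the dilation f_r(z) = f(rz) lies in X with sup_{0≤r<1} ||f_r||_X ≲ ||f||_X, and let T be an intrinsic operator with Tf_r ∈ H_{v,0} for all f ∈ X and 0 ≤ r < 1. If T : X → H_v is weakly compact, then T maps X into H_{v,0} and T : X → H_{v,0} is bounded. -/

import Mathlib

/-!
Dilate: `f_r → f` locally uniformly on the disk as `r → 1`, so `T f_r → T f` pointwise because `T`
is intrinsic. The dilations are bounded in `X`, so by weak compactness the images `T f_r` have a
weak cluster point `w` in `H_v`. Testing `w` against the point evaluations shows `w = T f`. Each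
`T f_r` lies in `H_{v,0}`, a norm-closed subspace and hence weakly closed, so `T f ∈ H_{v,0}`.
-/

open Metric Filter Topology

/-- The open unit disk in the complex plane. -/
def UnitDisk : Set ℂ := Metric.ball (0 : ℂ) 1

/-- The filter of `z` in the plane with `|z| → 1⁻`, used to express boundary limits. -/
noncomputable def bdryFilter : Filter ℂ := Filter.comap (fun z : ℂ => ‖z‖) (nhdsWithin 1 (Set.Iio 1))

open Set

section Dilation

variable {V E ι : Type*} [NormedAddCommGroup V] [NormedSpace ℝ V] [LocallyCompactSpace V]
  [UniformSpace E]

theorem tendstoLocallyUniformlyOn_comp_smul {f : V → E} (hf : ContinuousOn f (ball 0 1))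
    {l : Filter ι} {r : ι → ℝ} (hr : ∀ᶠ i in l, r i ∈ Icc 0 1) (hr₁ : Tendsto r l (𝓝 1)) :
    TendstoLocallyUniformlyOn (fun i z => f (r i • z)) f l (ball 0 1) := by
  have hmaps : MapsTo (fun p : ℝ × V => p.1 • p.2) (Icc 0 1 ×ˢ ball 0 1) (ball 0 1) :=
    fun p hp => balanced_ball_zero.smul_mem (by simpa [abs_of_nonneg hp.1.1] using hp.1.2) hp.2
  have hcont : ContinuousOn (fun p : ℝ × V => f (p.1 • p.2)) (Icc 0 1 ×ˢ ball 0 1) :=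
    hf.comp continuous_smul.continuousOn hmaps
  rw [tendstoLocallyUniformlyOn_iff_forall_isCompact isOpen_ball]
  intro K hK hKc u hu
  obtain ⟨s, hs, hsu⟩ := hKc.mem_uniformity_of_prod (f := fun (p : ℝ) (z : V) => f (p • z))
    (hcont.mono (prod_mono subset_rfl hK)) (right_mem_Icc.2 zero_le_one) (symm_le_uniformity hu)
  filter_upwards [tendsto_nhdsWithin_iff.2 ⟨hr₁, hr⟩ hs] with i hi z hz
  simpa using hsu _ hi z hz

end Dilation

theorem Set.EqOn.apply_of_tendstoLocallyUniformlyOn {α β γ : Type*} [TopologicalSpace α]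
    [UniformSpace β] [UniformSpace γ] [T2Space γ] {s : Set α} {P : (α → β) → Prop}
    {T : (α → β) → α → γ}
    (hT : ∀ (F : ℕ → α → β) (f : α → β), (∀ n, P (F n)) → P f →
      TendstoLocallyUniformlyOn F f atTop s →
      TendstoLocallyUniformlyOn (fun n => T (F n)) (T f) atTop s)
    {φ ψ : α → β} (hφ : P φ) (hψ : P ψ) (h : EqOn φ ψ s) : EqOn (T φ) (T ψ) s := by
  intro x hx
  have hconst : TendstoLocallyUniformlyOn (fun _ : ℕ => φ) ψ atTop s :=
    fun u hu _ _ => ⟨s, self_mem_nhdsWithin, .of_forall fun _ z hz => by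
      simpa [h hz] using refl_mem_uniformity hu⟩
  exact tendsto_nhds_unique tendsto_const_nhds ((hT _ _ (fun _ => hφ) hψ hconst).tendsto_at hx)

section WeakClusterPoint

variable {𝕜 E ι : Type*} [RCLike 𝕜] [NormedAddCommGroup E] [NormedSpace 𝕜 E] {l : Filter ι}
  {y : ι → E} {w : E}

theorem MapClusterPt.dual_eq_of_tendsto
    (hw : MapClusterPt (toWeakSpace 𝕜 E w) l (fun i => toWeakSpace 𝕜 E (y i)))
    (ℓ : StrongDual 𝕜 E) {L : 𝕜} (hL : Tendsto (fun i => ℓ (y i)) l (𝓝 L)) : ℓ w = L := by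
  have hℓ : Continuous fun x : WeakSpace 𝕜 E => ℓ ((toWeakSpace 𝕜 E).symm x) :=
    WeakBilin.eval_continuous _ ℓ
  exact eq_of_nhds_neBot ((hw.continuousAt_comp hℓ.continuousAt).clusterPt.mono hL).neBot

theorem Convex.mem_of_mapClusterPt_toWeakSpace [NormedSpace ℝ E] [IsScalarTower ℝ 𝕜 E]
    {s : Set E} (hs : Convex ℝ s) (hsc : IsClosed s)
    (hw : MapClusterPt (toWeakSpace 𝕜 E w) l (fun i => toWeakSpace 𝕜 E (y i)))
    (hy : ∀ᶠ i in l, y i ∈ s) : w ∈ s := by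
  have hmem : toWeakSpace 𝕜 E w ∈ closure (toWeakSpace 𝕜 E '' s) :=
    clusterPt_iff_forall_mem_closure.1 hw _
      (mem_map.2 (hy.mono fun i hi => mem_image_of_mem _ hi))
  rw [← hs.toWeakSpace_closure 𝕜, hsc.closure_eq] at hmem
  obtain ⟨x, hx, hxw⟩ := hmem
  rwa [← (toWeakSpace 𝕜 E).injective hxw]

theorem exists_mapClusterPt_toWeakSpace_of_bounded {X : Type*} [NormedAddCommGroup X]
    [NormedSpace 𝕜 X] {S : X →L[𝕜] E}
    (hS : IsCompact (closure ((fun f => toWeakSpaceCLM 𝕜 E (S f)) '' closedBall 0 1)))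
    {u : ℕ → X} {R : ℝ} (hu : ∀ n, ‖u n‖ ≤ R) :
    ∃ w : E, MapClusterPt (toWeakSpace 𝕜 E w) atTop (fun n => toWeakSpace 𝕜 E (S (u n))) := by
  set a : 𝕜 := ((max R 0 + 1 : ℝ) : 𝕜)
  have ha : ‖a‖ = max R 0 + 1 := by rw [RCLike.norm_ofReal, abs_of_pos (by positivity)]
  have ha₀ : a ≠ 0 := norm_pos_iff.1 (by rw [ha]; positivity)
  have hball : ∀ n, a⁻¹ • u n ∈ closedBall (0 : X) 1 := fun n => by
    rw [mem_closedBall_zero_iff, norm_smul, norm_inv, ha, inv_mul_le_one₀ (by positivity)]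
    linarith [hu n, le_max_left R 0]
  obtain ⟨w₀, -, hw₀⟩ := hS.exists_clusterPt
    (f := map (fun n => toWeakSpaceCLM 𝕜 E (S (a⁻¹ • u n))) atTop)
    (le_principal_iff.2 <| mem_map.2 <| univ_mem' fun n =>
      subset_closure (mem_image_of_mem _ (hball n)))
  refine ⟨a • (toWeakSpace 𝕜 E).symm w₀, ?_⟩
  have := (mapClusterPt_def.2 hw₀).continuousAt_comp (continuous_const_smul a).continuousAt
  simpa [Function.comp_def, smul_smul, ha₀] using this

end WeakClusterPoint

theorem eq_of_eqOn_of_norm_le {𝕜 E F α : Type*} [Semiring 𝕜] [NormedAddCommGroup E]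
    [Module 𝕜 E] [SeminormedAddCommGroup F] [Module 𝕜 F] {j : E →ₗ[𝕜] α → F} {s : Set α}
    {v : α → ℝ}
    (hj : ∀ e (C : ℝ), 0 ≤ C → (∀ z ∈ s, v z * ‖j e z‖ ≤ C) → ‖e‖ ≤ C) {e e' : E}
    (h : EqOn (j e) (j e') s) : e = e' := by
  refine sub_eq_zero.1 (norm_le_zero_iff.1 (hj _ 0 le_rfl fun z hz => ?_))
  simp [h hz]

theorem isClosed_comap_zeroAtFilterSubmodule {𝕜 E F α : Type*} [NormedField 𝕜]
    [SeminormedAddCommGroup E] [Module 𝕜 E] [SeminormedAddCommGroup F] [NormedSpace 𝕜 F]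
    (L : E →ₗ[𝕜] α → F) {l : Filter α} {C : ℝ} (hL : ∀ᶠ z in l, ∀ e, ‖L e z‖ ≤ C * ‖e‖) :
    IsClosed ((zeroAtFilterSubmodule 𝕜 l).comap L : Set E) := by
  refine isSeqClosed_iff_isClosed.1 fun e x he hx => ?_
  have hC : Tendsto (fun n => C * ‖e n - x‖) atTop (𝓝 0) := by
    simpa using (tendsto_iff_norm_sub_tendsto_zero.1 hx).const_mul C
  have hunif : TendstoUniformlyOnFilter (fun n => L (e n)) (L x) atTop l := by
    rw [Metric.tendstoUniformlyOnFilter_iff]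
    intro ε hε
    filter_upwards [(hC.eventually (gt_mem_nhds hε)).prod_mk hL] with ⟨n, z⟩ ⟨hn, hz⟩
    rw [dist_eq_norm', ← Pi.sub_apply, ← map_sub]
    exact (hz _).trans_lt hn
  exact hunif.tendsto_of_eventually_tendsto (.of_forall he) tendsto_const_nhds

section WeightedVanishing

variable {E α : Type*} [NormedAddCommGroup E] [NormedSpace ℂ E]

/-- With `j` realising `H_v` as functions on the disk and `l = bdryFilter`, this is `H_{v,0}`. -/
noncomputable def vanishingSubmodule (v : α → ℝ) (j : E →ₗ[ℂ] α → ℂ) (l : Filter α) :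
    Submodule ℂ E :=
  (zeroAtFilterSubmodule ℂ l).comap (LinearMap.pi fun z => v z • (LinearMap.proj z ∘ₗ j))

variable {v : α → ℝ} {j : E →ₗ[ℂ] α → ℂ} {l : Filter α}

theorem mem_vanishingSubmodule_iff (hv : ∀ᶠ z in l, 0 ≤ v z) {e : E} :
    e ∈ vanishingSubmodule v j l ↔ Tendsto (fun z => v z * ‖j e z‖) l (𝓝 0) := by
  refine tendsto_zero_iff_norm_tendsto_zero.trans (tendsto_congr' ?_)
  filter_upwards [hv] with z hz
  simp [abs_of_nonneg hz]

theorem isClosed_vanishingSubmodule (hv : ∀ᶠ z in l, 0 ≤ v z)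
    (hj : ∀ᶠ z in l, ∀ e, v z * ‖j e z‖ ≤ ‖e‖) : IsClosed (vanishingSubmodule v j l : Set E) := by
  refine isClosed_comap_zeroAtFilterSubmodule _ (C := 1) ?_
  filter_upwards [hv, hj] with z hz hjz e
  simpa [norm_smul, abs_of_nonneg hz] using hjz e

end WeightedVanishing

theorem eventually_mem_unitDisk : ∀ᶠ z in bdryFilter, z ∈ UnitDisk := by
  rw [bdryFilter, eventually_comap]
  filter_upwards [self_mem_nhdsWithin] with b hb z rfl
  simpa [UnitDisk] using hb

theorem ofReal_mul_mem_unitDisk {r : ℝ} (hr : r ∈ Icc 0 1) {z : ℂ} (hz : z ∈ UnitDisk) :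
    (r : ℂ) * z ∈ UnitDisk :=
  (balanced_ball_zero (𝕜 := ℂ)).smul_mem (a := (r : ℂ))
    (by simpa [abs_of_nonneg hr.1] using hr.2) hz

theorem stmt_15_general {X Hv : Type*}
    [NormedAddCommGroup X] [NormedSpace ℂ X]
    [NormedAddCommGroup Hv] [NormedSpace ℂ Hv]
    (v : ℂ → ℝ)
    (hv_pos : ∀ z ∈ UnitDisk, 0 < v z)
    (ιX : X →ₗ[ℂ] (ℂ → ℂ))
    (hιX_hol : ∀ f : X, DifferentiableOn ℂ (ιX f) UnitDisk)
    (j : Hv →ₗ[ℂ] (ℂ → ℂ))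
    (hj_le : ∀ (g : Hv), ∀ z ∈ UnitDisk, v z * ‖j g z‖ ≤ ‖g‖)
    (hj_norm : ∀ (g : Hv) (C : ℝ), 0 ≤ C → (∀ z ∈ UnitDisk, v z * ‖j g z‖ ≤ C) → ‖g‖ ≤ C)
    (K : ℂ → (Hv →L[ℂ] ℂ)) (hK : ∀ z ∈ UnitDisk, ∀ g : Hv, K z g = j g z)
    (T : (ℂ → ℂ) →ₗ[ℂ] (ℂ → ℂ))
    (hT_intr : ∀ (F : ℕ → (ℂ → ℂ)) (f : ℂ → ℂ),
      (∀ n, DifferentiableOn ℂ (F n) UnitDisk) → DifferentiableOn ℂ f UnitDisk →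
      TendstoLocallyUniformlyOn F f atTop UnitDisk →
      TendstoLocallyUniformlyOn (fun n => T (F n)) (T f) atTop UnitDisk)
    (hdil : ∃ c : ℝ, 0 < c ∧ ∀ (f : X) (r : ℝ), 0 ≤ r → r < 1 →
      ∃ fr : X, (∀ z ∈ UnitDisk, ιX fr z = ιX f ((r : ℂ) * z)) ∧ ‖fr‖ ≤ c * ‖f‖)
    (hTr : ∀ (f : X) (r : ℝ), 0 ≤ r → r < 1 →
      Tendsto (fun z => v z * ‖T (fun w => ιX f ((r : ℂ) * w)) z‖) bdryFilter (nhds 0))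
    (S : X →L[ℂ] Hv) (hS : ∀ f : X, ∀ z ∈ UnitDisk, j (S f) z = T (ιX f) z)
    (hwc : IsCompact (closure ((fun f => toWeakSpaceCLM ℂ Hv (S f)) '' Metric.closedBall 0 1))) :
    ∀ f : X, Tendsto (fun z => v z * ‖j (S f) z‖) bdryFilter (nhds 0) := by
  obtain ⟨c, -, hdil⟩ := hdil
  intro f
  set r : ℕ → ℝ := fun n => n / (n + 1)
  have hr : ∀ n, r n ∈ Ico 0 1 := fun n =>
    ⟨by positivity, (div_lt_one (by positivity)).2 (lt_add_one _)⟩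
  set F : ℕ → ℂ → ℂ := fun n z => ιX f (r n * z)
  have hF : ∀ n, DifferentiableOn ℂ (F n) UnitDisk := fun n =>
    (hιX_hol f).comp (by fun_prop) fun z hz =>
      ofReal_mul_mem_unitDisk (Ico_subset_Icc_self (hr n)) hz
  have hFf : TendstoLocallyUniformlyOn F (ιX f) atTop UnitDisk := by
    simpa only [Complex.real_smul, UnitDisk] using
      tendstoLocallyUniformlyOn_comp_smul (hιX_hol f).continuousOn
        (.of_forall fun n => Ico_subset_Icc_self (hr n)) (tendsto_natCast_div_add_atTop 1)
  choose fr hfr hfr_norm using fun n => hdil f (r n) (hr n).1 (hr n).2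
  have hSfr : ∀ n, EqOn (j (S (fr n))) (T (F n)) UnitDisk := fun n z hz =>
    (hS _ z hz).trans <| EqOn.apply_of_tendstoLocallyUniformlyOn
      (P := fun g => DifferentiableOn ℂ g UnitDisk) hT_intr (hιX_hol _) (hF n) (hfr n) hz
  have hv : ∀ᶠ z in bdryFilter, 0 ≤ v z :=
    eventually_mem_unitDisk.mono fun z hz => (hv_pos z hz).le
  obtain ⟨w, hw⟩ := exists_mapClusterPt_toWeakSpace_of_bounded hwc hfr_norm
  have hwM : w ∈ vanishingSubmodule v j bdryFilter := by
    refine ((vanishingSubmodule v j bdryFilter).restrictScalars ℝ).convex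
      |>.mem_of_mapClusterPt_toWeakSpace (isClosed_vanishingSubmodule hv ?_) hw
        (.of_forall fun n => ?_)
    · exact eventually_mem_unitDisk.mono fun z hz e => hj_le e z hz
    · refine (mem_vanishingSubmodule_iff hv).2 ((hTr f (r n) (hr n).1 (hr n).2).congr' ?_)
      filter_upwards [eventually_mem_unitDisk] with z hz
      rw [hSfr n hz]
  have hwf : w = S f := eq_of_eqOn_of_norm_le hj_norm fun z hz => by
    have hlim : Tendsto (fun n => K z (S (fr n))) atTop (𝓝 (T (ιX f) z)) :=
      ((hT_intr F _ hF (hιX_hol f) hFf).tendsto_at hz).congr fun n => by rw [hK z hz, hSfr n hz]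
    rw [← hK z hz, hw.dual_eq_of_tendsto (K z) hlim, hS f z hz]
  rw [← hwf]
  exact (mem_vanishingSubmodule_iff hv).1 hwM

/-- Let `X` be an initial space closed under dilations `f_r(z) = f(rz)` with
`sup_{0 ≤ r < 1} ‖f_r‖_X ≲ ‖f‖_X`, and let `T` be an intrinsic operator with
`T f_r ∈ H_{v,0}` for all `f ∈ X`, `0 ≤ r < 1`.  If `T : X → H_v` (realized by
`S : X →L[ℂ] Hv`) is weakly compact, then `T` maps `X` into `H_{v,0}` (and hence
`T : X → H_{v,0}` is bounded). -/
theorem stmt_15 {X Hv : Type*}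
    [NormedAddCommGroup X] [NormedSpace ℂ X] [CompleteSpace X]
    [NormedAddCommGroup Hv] [NormedSpace ℂ Hv] [CompleteSpace Hv]
    (v : ℂ → ℝ)
    (hv_cont : ContinuousOn v UnitDisk)
    (hv_pos : ∀ z ∈ UnitDisk, 0 < v z)
    (hv_le1 : ∀ z ∈ UnitDisk, v z ≤ 1)
    (hv_rad : ∀ z ∈ UnitDisk, ∀ w ∈ UnitDisk, ‖z‖ = ‖w‖ → v z = v w)
    (hv_mono : ∀ z ∈ UnitDisk, ∀ w ∈ UnitDisk, ‖z‖ ≤ ‖w‖ → v w ≤ v z)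
    (hv_lim : Tendsto v bdryFilter (nhds 0))
    (ιX : X →ₗ[ℂ] (ℂ → ℂ)) (hιX_inj : Function.Injective ιX)
    (hιX_hol : ∀ f : X, DifferentiableOn ℂ (ιX f) UnitDisk)
    (hX_poly : ∀ q : Polynomial ℂ, ∃ f : X, ∀ z ∈ UnitDisk, ιX f z = q.eval z)
    (hX_ball : ∀ u : ℕ → X, (∀ n, ‖u n‖ ≤ 1) →
      ∃ (f : X) (σ : ℕ → ℕ), StrictMono σ ∧ ‖f‖ ≤ 1 ∧
        TendstoLocallyUniformlyOn (fun k => ιX (u (σ k))) (ιX f) atTop UnitDisk)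
    (j : Hv →ₗ[ℂ] (ℂ → ℂ)) (hj_inj : Function.Injective j)
    (hj_hol : ∀ g : Hv, DifferentiableOn ℂ (j g) UnitDisk)
    (hj_le : ∀ (g : Hv), ∀ z ∈ UnitDisk, v z * ‖j g z‖ ≤ ‖g‖)
    (hj_norm : ∀ (g : Hv) (C : ℝ), 0 ≤ C → (∀ z ∈ UnitDisk, v z * ‖j g z‖ ≤ C) → ‖g‖ ≤ C)
    (hj_surj : ∀ f : ℂ → ℂ, DifferentiableOn ℂ f UnitDisk →
      (∃ C : ℝ, ∀ z ∈ UnitDisk, v z * ‖f z‖ ≤ C) → ∃ g : Hv, ∀ z ∈ UnitDisk, j g z = f z)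
    (K : ℂ → (Hv →L[ℂ] ℂ)) (hK : ∀ z ∈ UnitDisk, ∀ g : Hv, K z g = j g z)
    (T : (ℂ → ℂ) →ₗ[ℂ] (ℂ → ℂ))
    (hT_hol : ∀ f : ℂ → ℂ, DifferentiableOn ℂ f UnitDisk →
      DifferentiableOn ℂ (T f) UnitDisk)
    (hT_intr : ∀ (F : ℕ → (ℂ → ℂ)) (f : ℂ → ℂ),
      (∀ n, DifferentiableOn ℂ (F n) UnitDisk) → DifferentiableOn ℂ f UnitDisk →
      TendstoLocallyUniformlyOn F f atTop UnitDisk →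
      TendstoLocallyUniformlyOn (fun n => T (F n)) (T f) atTop UnitDisk)
    (hdil : ∃ c : ℝ, 0 < c ∧ ∀ (f : X) (r : ℝ), 0 ≤ r → r < 1 →
      ∃ fr : X, (∀ z ∈ UnitDisk, ιX fr z = ιX f ((r : ℂ) * z)) ∧ ‖fr‖ ≤ c * ‖f‖)
    (hTr : ∀ (f : X) (r : ℝ), 0 ≤ r → r < 1 →
      Tendsto (fun z => v z * ‖T (fun w => ιX f ((r : ℂ) * w)) z‖) bdryFilter (nhds 0))
    (S : X →L[ℂ] Hv) (hS : ∀ f : X, ∀ z ∈ UnitDisk, j (S f) z = T (ιX f) z)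
    (hwc : IsCompact (closure ((fun f => toWeakSpaceCLM ℂ Hv (S f)) '' Metric.closedBall 0 1))) :
    ∀ f : X, Tendsto (fun z => v z * ‖j (S f) z‖) bdryFilter (nhds 0) :=
  stmt_15_general v hv_pos ιX hιX_hol j hj_le hj_norm K hK T hT_intr hdil hTr S hS hwc
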